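/- Let M be an (H,u)-perfect pseudo MV-algebra with (H,u)-decomposition (M_t : t ∈ [0,u]_H), and let a ∈ M_v and b ∈ M_t. Then: (i) if v+t < u, the partial sum a+b is defined in M and a+b ∈ M_{v+t}; if a+b is defined in M, then v+t ≤ u; and if a+b is defined in M and v+t = u, then a+b ∈ M_u; (ii) if v+t < u, then M_v + M_t is defined in M and M_v + M_t = M_{v+t}; (iii) if v+t > u, then a+b is not defined in M; (iv) a∨b ∈ M_{v∨t} and a∧b ∈ M_{v∧t}. -/

import Mathlib

open Set

namespace PseudoMV

/-! ### Basic pseudo MV-algebra notions on the interval `Γ(K,v) = [0,v]`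
of a (not necessarily abelian) lattice-ordered group `K`. -/

section Defs

variable {K : Type*} [Lattice K] [AddGroup K]

/-- `v` is a strong (order) unit of `K`. -/
def IsStrongUnit (v : K) : Prop := 0 ≤ v ∧ ∀ x : K, ∃ n : ℕ, x ≤ n • v

/-- The carrier of the pseudo MV-algebra `Γ(K,v)`. -/
def carrier (v : K) : Set K := Set.Icc 0 v

/-- `x ⊕ y = (x + y) ⊓ v`. -/
def oplus (v x y : K) : K := (x + y) ⊓ v

/-- Left negation `x⁻ = v - x`. -/
def negL (v x : K) : K := v - x

/-- Right negation `x~ = -x + v`. -/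
def negR (v x : K) : K := -x + v

/-- `x ⊙ y = (x - v + y) ⊔ 0`. -/
def odot (v x y : K) : K := (x - v + y) ⊔ 0

/-- The partial sum `x + y` is defined in `Γ(K,v)`, i.e. the group sum lies in `[0,v]`. -/
def sumDef (v x y : K) : Prop := 0 ≤ x + y ∧ x + y ≤ v

/-- `n`-fold sum `n.x = x ⊕ ⋯ ⊕ x`. -/
def nOplus (v : K) : ℕ → K → K
  | 0, _ => 0
  | n + 1, x => oplus v (nOplus v n x) x

/-- `ord(x) < ∞`, i.e. some `n ≥ 1` satisfies `n.x = 1`. -/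
def OrdFinite (v x : K) : Prop := ∃ n : ℕ, 1 ≤ n ∧ nOplus v n x = v

/-- The set of infinitesimal elements: all `n`-fold partial sums `nx` are defined. -/
def Infinit (v : K) : Set K := {x | x ∈ carrier v ∧ ∀ n : ℕ, n • x ≤ v}

/-- An ideal of `Γ(K,v)`. -/
structure IsIdeal (v : K) (I : Set K) : Prop where
  subset : I ⊆ carrier v
  nonempty : I.Nonempty
  lower : ∀ a ∈ carrier v, ∀ b ∈ I, a ≤ b → a ∈ I
  oplus_mem : ∀ a ∈ I, ∀ b ∈ I, oplus v a b ∈ I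

/-- A normal ideal: `x ⊕ I = I ⊕ x` for every `x`. -/
def IsNormalIdeal (v : K) (I : Set K) : Prop :=
  IsIdeal v I ∧ ∀ x ∈ carrier v, (fun a => oplus v x a) '' I = (fun a => oplus v a x) '' I

/-- A maximal ideal: proper and not properly contained in a proper ideal. -/
def IsMaximalIdeal (v : K) (I : Set K) : Prop :=
  IsIdeal v I ∧ I ≠ carrier v ∧ ∀ J, IsIdeal v J → I ⊆ J → J ≠ carrier v → J = I

/-- A prime ideal. -/
def IsPrimeIdeal (v : K) (I : Set K) : Prop :=
  IsIdeal v I ∧ ∀ x ∈ carrier v, ∀ y ∈ carrier v, x ⊓ y ∈ I → x ∈ I ∨ y ∈ I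

/-- The radical: intersection of all maximal ideals. -/
def Rad (v : K) : Set K := ⋂₀ {I | IsMaximalIdeal v I}

/-- The normal radical: intersection of all maximal ideals that are normal. -/
def RadN (v : K) : Set K := ⋂₀ {I | IsMaximalIdeal v I ∧ IsNormalIdeal v I}

/-- Membership in the class `𝓜`: every maximal ideal is normal. -/
def MemClassM (v : K) : Prop := ∀ I, IsMaximalIdeal v I → IsNormalIdeal v I

/-- A symmetric pseudo MV-algebra: the two negations coincide. -/
def IsSymmetric (v : K) : Prop := ∀ x ∈ carrier v, negL v x = negR v x

/-- A local pseudo MV-algebra: a unique maximal ideal, which is moreover normal. -/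
def IsLocal (v : K) : Prop :=
  ∃ I, IsMaximalIdeal v I ∧ IsNormalIdeal v I ∧ ∀ J, IsMaximalIdeal v J → J = I

/-- A state on `Γ(K,v)`. -/
structure IsState (v : K) (s : K → ℝ) : Prop where
  maps_to : ∀ x ∈ carrier v, s x ∈ Set.Icc (0 : ℝ) 1
  map_unit : s v = 1
  additive : ∀ x ∈ carrier v, ∀ y ∈ carrier v, sumDef v x y → s (x + y) = s x + s y

/-- The kernel of a state. -/
def stateKer (v : K) (s : K → ℝ) : Set K := {x | x ∈ carrier v ∧ s x = 0}

/-- `x/I = y/I` in the quotient by the (normal) ideal `I`. -/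
def quotEq (v : K) (I : Set K) (x y : K) : Prop :=
  oplus v (odot v x (negL v y)) (odot v y (negL v x)) ∈ I

/-- `x/I ≤ y/I` in the quotient by the (normal) ideal `I`. -/
def quotLE (v : K) (I : Set K) (x y : K) : Prop := odot v x (negL v y) ∈ I

/-- A commutative ideal: a normal ideal with commutative quotient. -/
def IsCommutativeIdeal (v : K) (I : Set K) : Prop :=
  IsNormalIdeal v I ∧ ∀ x ∈ carrier v, ∀ y ∈ carrier v, quotEq v I (oplus v x y) (oplus v y x)

/-- A strict ideal: `x/I < y/I` implies `x < y`. -/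
def IsStrictIdeal (v : K) (I : Set K) : Prop :=
  ∀ x ∈ carrier v, ∀ y ∈ carrier v, quotLE v I x y → ¬ quotLE v I y x → x < y

/-- A retractive (normal) ideal: the canonical projection `π_I : M → M/I` admits a
homomorphic section `δ_I` with `π_I ∘ δ_I = id`.  We encode `δ_I` by the map
`d = δ_I ∘ π_I : M → M`, which must be constant on classes, a homomorphism with respect
to the quotient operations, and a section of `π_I`. -/
def IsRetractive (v : K) (I : Set K) : Prop :=
  ∃ d : K → K,
    (∀ x ∈ carrier v, d x ∈ carrier v) ∧
    (∀ x ∈ carrier v, ∀ y ∈ carrier v, quotEq v I x y → d x = d y) ∧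
    (∀ x ∈ carrier v, ∀ y ∈ carrier v, d (oplus v x y) = oplus v (d x) (d y)) ∧
    (∀ x ∈ carrier v, d (negL v x) = negL v (d x)) ∧
    (∀ x ∈ carrier v, d (negR v x) = negR v (d x)) ∧
    d 0 = 0 ∧ d v = v ∧
    (∀ x ∈ carrier v, quotEq v I (d x) x)

/-- A lexicographic ideal: a nontrivial proper commutative ideal that is strict,
retractive and prime. -/
def IsLexIdeal (v : K) (I : Set K) : Prop :=
  IsCommutativeIdeal v I ∧ I ≠ {0} ∧ I ≠ carrier v ∧
    IsStrictIdeal v I ∧ IsRetractive v I ∧ IsPrimeIdeal v I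

/-- A subalgebra of `Γ(K,v)`. -/
def IsSubalgebra (v : K) (S : Set K) : Prop :=
  S ⊆ carrier v ∧ 0 ∈ S ∧ v ∈ S ∧
    (∀ x ∈ S, ∀ y ∈ S, oplus v x y ∈ S) ∧
    (∀ x ∈ S, negL v x ∈ S) ∧ (∀ x ∈ S, negR v x ∈ S)

/-- The subalgebra generated by a subset. -/
def genSubalg (v : K) (A : Set K) : Set K := ⋂₀ {S | IsSubalgebra v S ∧ A ⊆ S}

end Defs

/-! ### `(H,u)`-decompositions -/

section Decomp

variable {H : Type*} [AddCommGroup H] [LinearOrder H] [IsOrderedAddMonoid H]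
variable {K : Type*} [Lattice K] [AddGroup K]

/-- An `(H,u)`-decomposition of the pseudo MV-algebra `Γ(K,v)`. -/
structure IsDecomposition (u : H) (v : K) (Md : H → Set K) : Prop where
  nonempty : ∀ t ∈ Set.Icc (0 : H) u, (Md t).Nonempty
  subset : ∀ t ∈ Set.Icc (0 : H) u, Md t ⊆ carrier v
  disjoint : ∀ s ∈ Set.Icc (0 : H) u, ∀ t ∈ Set.Icc (0 : H) u, s ≠ t → Md s ∩ Md t = ∅
  cover : ∀ x ∈ carrier v, ∃ t ∈ Set.Icc (0 : H) u, x ∈ Md t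
  mono : ∀ s ∈ Set.Icc (0 : H) u, ∀ t ∈ Set.Icc (0 : H) u, s < t →
    ∀ a ∈ Md s, ∀ b ∈ Md t, a ≤ b
  negL_eq : ∀ t ∈ Set.Icc (0 : H) u, negL v '' Md t = Md (u - t)
  negR_eq : ∀ t ∈ Set.Icc (0 : H) u, negR v '' Md t = Md (u - t)
  oplus_mem : ∀ s ∈ Set.Icc (0 : H) u, ∀ t ∈ Set.Icc (0 : H) u, ∀ x ∈ Md s, ∀ y ∈ Md t,
    oplus v x y ∈ Md (min (s + t) u)

/-- A strong cyclic family for an `(H,u)`-decomposition. -/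
def StrongCyclicFamily (u : H) (v : K) (Md : H → Set K) (c : H → K) : Prop :=
  (∀ t ∈ Set.Icc (0 : H) u, c t ∈ Md t ∧ ∀ x : K, c t + x = x + c t) ∧
  (∀ s ∈ Set.Icc (0 : H) u, ∀ t ∈ Set.Icc (0 : H) u, s + t ≤ u → c s + c t = c (s + t)) ∧
  c u = v

/-- A strong `(H,u)`-perfect pseudo MV-algebra. -/
def IsStrongPerfect (u : H) (v : K) : Prop :=
  ∃ Md c, IsDecomposition u v Md ∧ StrongCyclicFamily u v Md c

/-- A weak cyclic family for an `(H,u)`-decomposition. -/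
def WeakCyclicFamily (u : H) (v : K) (Md : H → Set K) (c : H → K) : Prop :=
  c 0 = 0 ∧
  (∀ t ∈ Set.Icc (0 : H) u, c t ∈ Md t ∧ ∀ x : K, c t + x = x + c t) ∧
  (∀ s ∈ Set.Icc (0 : H) u, ∀ t ∈ Set.Icc (0 : H) u, s + t ≤ u → c s + c t = c (s + t))

end Decomp

/-! ### Isomorphisms -/

section Iso

variable {K : Type*} [Lattice K] [AddGroup K]
variable {K' : Type*} [Lattice K'] [AddGroup K']

/-- An isomorphism of the pseudo MV-algebras `Γ(K,v)` and `Γ(K',v')` (encoded as a map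
`K → K'` whose restriction to `[0,v]` is a bijection onto `[0,v']` preserving all
pseudo MV-operations). -/
structure IsPMVIso (v : K) (v' : K') (f : K → K') : Prop where
  maps_to : ∀ x ∈ carrier v, f x ∈ carrier v'
  inj : ∀ x ∈ carrier v, ∀ y ∈ carrier v, f x = f y → x = y
  surj : ∀ y ∈ carrier v', ∃ x ∈ carrier v, f x = y
  map_zero : f 0 = 0
  map_unit : f v = v'
  map_oplus : ∀ x ∈ carrier v, ∀ y ∈ carrier v, f (oplus v x y) = oplus v' (f x) (f y)
  map_negL : ∀ x ∈ carrier v, f (negL v x) = negL v' (f x)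
  map_negR : ∀ x ∈ carrier v, f (negR v x) = negR v' (f x)

/-- The pseudo MV-algebras `Γ(K,v)` and `Γ(K',v')` are isomorphic. -/
def PMVIsomorphic (v : K) (v' : K') : Prop := ∃ f, IsPMVIso v v' f

end Iso

/-- An isomorphism of lattice-ordered groups: an order isomorphism that is additive. -/
def LGroupIsomorphic (G : Type*) (G' : Type*) [Lattice G] [AddGroup G] [Lattice G']
    [AddGroup G'] : Prop :=
  ∃ e : G ≃o G', ∀ x y : G, e (x + y) = e x + e y

/-! ### The lexicographic product of a linearly ordered group and a lattice-ordered group -/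

/-- The lexicographic product `H ×ₗ G`. -/
@[ext]
structure LexProd (H : Type*) (G : Type*) where
  fst : H
  snd : G

namespace LexProd

variable {H : Type*} {G : Type*}

section Group

variable [AddGroup H] [AddGroup G]

instance : Add (LexProd H G) := ⟨fun p q => ⟨p.fst + q.fst, p.snd + q.snd⟩⟩
instance : Zero (LexProd H G) := ⟨⟨0, 0⟩⟩
instance : Neg (LexProd H G) := ⟨fun p => ⟨-p.fst, -p.snd⟩⟩

instance : AddGroup (LexProd H G) :=
  AddGroup.ofLeftAxioms (fun a b c => LexProd.ext (add_assoc _ _ _) (add_assoc _ _ _))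
    (fun a => LexProd.ext (zero_add _) (zero_add _))
    (fun a => LexProd.ext (neg_add_cancel _) (neg_add_cancel _))

@[simp] lemma add_fst (p q : LexProd H G) : (p + q).fst = p.fst + q.fst := rfl
@[simp] lemma add_snd (p q : LexProd H G) : (p + q).snd = p.snd + q.snd := rfl
@[simp] lemma zero_fst : (0 : LexProd H G).fst = 0 := rfl
@[simp] lemma zero_snd : (0 : LexProd H G).snd = 0 := rfl

end Group

section Order

variable [LinearOrder H] [Lattice G]

instance : PartialOrder (LexProd H G) where
  le p q := p.fst < q.fst ∨ (p.fst = q.fst ∧ p.snd ≤ q.snd)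
  le_refl p := Or.inr ⟨rfl, le_rfl⟩
  le_trans p q r := by
    rintro (h | ⟨h1, h2⟩) (h' | ⟨h1', h2'⟩)
    · exact Or.inl (h.trans h')
    · exact Or.inl (h1' ▸ h)
    · exact Or.inl (h1 ▸ h')
    · exact Or.inr ⟨h1.trans h1', h2.trans h2'⟩
  le_antisymm p q := by
    rintro (h | ⟨h1, h2⟩) (h' | ⟨h1', h2'⟩)
    · exact absurd (h.trans h') (lt_irrefl _)
    · exact absurd h (h1' ▸ lt_irrefl _)
    · exact absurd h' (h1 ▸ lt_irrefl _)
    · exact LexProd.ext h1 (le_antisymm h2 h2')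

lemma le_def {p q : LexProd H G} :
    p ≤ q ↔ p.fst < q.fst ∨ (p.fst = q.fst ∧ p.snd ≤ q.snd) := Iff.rfl

instance : Lattice (LexProd H G) :=
  { (inferInstance : PartialOrder (LexProd H G)) with
    sup := fun p q =>
      if p.fst < q.fst then q else if q.fst < p.fst then p else ⟨p.fst, p.snd ⊔ q.snd⟩
    inf := fun p q =>
      if p.fst < q.fst then p else if q.fst < p.fst then q else ⟨p.fst, p.snd ⊓ q.snd⟩
    le_sup_left := fun p q => by
      try dsimp only
      split_ifs with h1 h2
      · exact Or.inl h1
      · exact le_rfl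
      · exact Or.inr ⟨rfl, le_sup_left⟩
    le_sup_right := fun p q => by
      try dsimp only
      split_ifs with h1 h2
      · exact le_rfl
      · exact Or.inl h2
      · exact Or.inr ⟨le_antisymm (not_lt.mp h1) (not_lt.mp h2), le_sup_right⟩
    sup_le := fun p q r hp hq => by
      try dsimp only
      split_ifs with h1 h2
      · exact hq
      · exact hp
      · have hfq : p.fst = q.fst := le_antisymm (not_lt.mp h2) (not_lt.mp h1)
        rcases hp with hp | ⟨hp1, hp2⟩
        · exact Or.inl hp
        · rcases hq with hq | ⟨hq1, hq2⟩
          · exact Or.inl (lt_of_eq_of_lt hfq hq)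
          · exact Or.inr ⟨hp1, sup_le hp2 hq2⟩
    inf_le_left := fun p q => by
      try dsimp only
      split_ifs with h1 h2
      · exact le_rfl
      · exact Or.inl h2
      · exact Or.inr ⟨rfl, inf_le_left⟩
    inf_le_right := fun p q => by
      try dsimp only
      split_ifs with h1 h2
      · exact Or.inl h1
      · exact le_rfl
      · exact Or.inr ⟨le_antisymm (not_lt.mp h2) (not_lt.mp h1), inf_le_right⟩
    le_inf := fun p q r hq hr => by
      try dsimp only
      split_ifs with h1 h2
      · exact hq
      · exact hr
      · have hfq : q.fst = r.fst := le_antisymm (not_lt.mp h2) (not_lt.mp h1)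
        rcases hq with hq | ⟨hq1, hq2⟩
        · exact Or.inl hq
        · rcases hr with hr | ⟨hr1, hr2⟩
          · exact Or.inl (lt_of_lt_of_eq hr hfq.symm)
          · exact Or.inr ⟨hq1, le_inf hq2 hr2⟩ }

end Order

section Covariant

variable [AddCommGroup H] [LinearOrder H] [IsOrderedAddMonoid H] [Lattice G] [AddGroup G]
  [CovariantClass G G (· + ·) (· ≤ ·)] [CovariantClass G G (Function.swap (· + ·)) (· ≤ ·)]

instance : CovariantClass (LexProd H G) (LexProd H G) (· + ·) (· ≤ ·) := by
  constructor
  rintro a x y (h | ⟨h1, h2⟩)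
  · exact Or.inl (add_lt_add_right h a.fst)
  · exact Or.inr ⟨by simp [h1], add_le_add_right h2 a.snd⟩

instance : CovariantClass (LexProd H G) (LexProd H G) (Function.swap (· + ·)) (· ≤ ·) := by
  constructor
  rintro a x y (h | ⟨h1, h2⟩)
  · exact Or.inl (add_lt_add_left h a.fst)
  · exact Or.inr ⟨by simp [h1], add_le_add_left h2 a.snd⟩

end Covariant

end LexProd

/-! ### Bundled lattice-ordered groups and linearly ordered unital abelian groups -/

universe u

/-- A bundled (not necessarily abelian) lattice-ordered group. -/
structure LGroupS : Type (u + 1) where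
  carrier : Type u
  [lat : Lattice carrier]
  [grp : AddGroup carrier]
  [cov_left : CovariantClass carrier carrier (· + ·) (· ≤ ·)]
  [cov_right : CovariantClass carrier carrier (Function.swap (· + ·)) (· ≤ ·)]

attribute [instance] LGroupS.lat LGroupS.grp LGroupS.cov_left LGroupS.cov_right

/-- A bundled linearly ordered abelian group with a strong unit. -/
structure LoGroupU : Type (u + 1) where
  carrier : Type u
  [addCommGroup : AddCommGroup carrier]
  [linearOrder : LinearOrder carrier]
  [isOrderedAddMonoid : IsOrderedAddMonoid carrier]
  unit : carrier
  isStrongUnit : IsStrongUnit unit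

attribute [instance] LoGroupU.addCommGroup LoGroupU.linearOrder LoGroupU.isOrderedAddMonoid

/-- A lexicographic pseudo MV-algebra: one isomorphic to `Γ(H ×ₗ G, (u,0))` for some
linearly ordered abelian group `H` with strong unit `u` and some ℓ-group `G`. -/
def IsLexicographicPMV.{u₁, u₂, u₃} {K : Type u₃} [Lattice K] [AddGroup K] (v : K) : Prop :=
  ∃ (Hs : LoGroupU.{u₁}) (Gs : LGroupS.{u₂}),
    PMVIsomorphic v (LexProd.mk Hs.unit (0 : Gs.carrier))

end PseudoMV

/-! Classes are disjoint and ordered like `[0,u]_H`, so `a ≤ b` forces `s ≤ t`. Since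
`v - b ∈ M_{u-t}`, the sum `a + b` is defined iff `a ≤ v - b`, which comparing `s` with `u - t`
decides; on defined sums `⊕` is `+`, whence `a + b ∈ M_{s+t}`. The two negations turn `⊔` into
`⊓`. -/

namespace PseudoMV.IsDecomposition

variable {H : Type*} [AddCommGroup H] [LinearOrder H]
  {K : Type*} [Lattice K] [AddGroup K] {u : H} {v : K} {Md : H → Set K}
  {s t : H} {a b : K}

theorem eq_of_mem (hMd : IsDecomposition u v Md) (hs : s ∈ Icc 0 u) (ht : t ∈ Icc 0 u)
    (ha : a ∈ Md s) (ha' : a ∈ Md t) : s = t := by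
  by_contra hst
  exact (hMd.disjoint s hs t ht hst).subset ⟨ha, ha'⟩

theorem exists_mem_le (hMd : IsDecomposition u v Md) (hs : s ∈ Icc 0 u) (ht : t ∈ Icc 0 u)
    (hst : s ≤ t) (hb : b ∈ Md t) : ∃ a ∈ Md s, a ≤ b := by
  rcases hst.eq_or_lt with rfl | hst
  · exact ⟨b, hb, le_rfl⟩
  · obtain ⟨a, ha⟩ := hMd.nonempty s hs
    exact ⟨a, ha, hMd.mono s hs t ht hst a ha b hb⟩

theorem sub_mem (hMd : IsDecomposition u v Md) (ht : t ∈ Icc 0 u) (hb : b ∈ Md t) :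
    v - b ∈ Md (u - t) :=
  hMd.negL_eq t ht ▸ ⟨b, hb, rfl⟩

theorem neg_add_mem (hMd : IsDecomposition u v Md) (ht : t ∈ Icc 0 u) (hb : b ∈ Md t) :
    -b + v ∈ Md (u - t) :=
  hMd.negR_eq t ht ▸ ⟨b, hb, rfl⟩

theorem le_of_mem_of_le (hMd : IsDecomposition u v Md) (hs : s ∈ Icc 0 u) (ht : t ∈ Icc 0 u)
    (ha : a ∈ Md s) (hb : b ∈ Md t) (hab : a ≤ b) : s ≤ t := by
  by_contra! hts
  have hba : b = a := le_antisymm (hMd.mono t ht s hs hts b hb a ha) hab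
  exact hts.ne (hMd.eq_of_mem ht hs hb (hba ▸ ha))

variable [IsOrderedAddMonoid H] [CovariantClass K K (Function.swap (· + ·)) (· ≤ ·)]

theorem add_le_of_sumDef (hMd : IsDecomposition u v Md) (hs : s ∈ Icc 0 u)
    (ht : t ∈ Icc 0 u) (ha : a ∈ Md s) (hb : b ∈ Md t) (hab : sumDef v a b) : s + t ≤ u :=
  le_sub_iff_add_le.1 <| hMd.le_of_mem_of_le hs (sub_mem_Icc_zero_iff_right.2 ht) ha
    (hMd.sub_mem ht hb) (le_sub_iff_add_le.2 hab.2)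

theorem add_mem_of_sumDef (hMd : IsDecomposition u v Md) (hs : s ∈ Icc 0 u)
    (ht : t ∈ Icc 0 u) (ha : a ∈ Md s) (hb : b ∈ Md t) (hab : sumDef v a b) :
    a + b ∈ Md (s + t) := by
  have h := hMd.oplus_mem s hs t ht a ha b hb
  rwa [oplus, inf_eq_left.2 hab.2, min_eq_left (hMd.add_le_of_sumDef hs ht ha hb hab)] at h

variable [CovariantClass K K (· + ·) (· ≤ ·)]

theorem sumDef_of_add_lt (hMd : IsDecomposition u v Md) (hs : s ∈ Icc 0 u)
    (ht : t ∈ Icc 0 u) (hst : s + t < u) (ha : a ∈ Md s) (hb : b ∈ Md t) : sumDef v a b := by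
  have hab : a ≤ v - b := hMd.mono s hs (u - t) (sub_mem_Icc_zero_iff_right.2 ht)
    (lt_sub_iff_add_lt.2 hst) a ha _ (hMd.sub_mem ht hb)
  exact ⟨add_nonneg (hMd.subset s hs ha).1 (hMd.subset t ht hb).1, le_sub_iff_add_le.1 hab⟩

theorem exists_add_eq (hMd : IsDecomposition u v Md) (hs : s ∈ Icc 0 u) (ht : t ∈ Icc 0 u)
    {z : K} (hz : z ∈ Md (s + t)) (hst : s + t ≤ u) :
    ∃ a ∈ Md s, ∃ b ∈ Md t, sumDef v a b ∧ a + b = z := by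
  have hst' : s + t ∈ Icc 0 u := ⟨add_nonneg hs.1 ht.1, hst⟩
  obtain ⟨b, hb, hbz⟩ := hMd.exists_mem_le ht hst' (le_add_of_nonneg_left hs.1) hz
  have hz' := hMd.subset _ hst' hz
  have hsum : z - b + b = z := sub_add_cancel z b
  have hab : sumDef v (z - b) b := by
    rw [sumDef, hsum]
    exact hz'
  obtain ⟨r, hr, ha⟩ := hMd.cover (z - b)
    ⟨sub_nonneg.2 hbz, (sub_le_self z (hMd.subset t ht hb).1).trans hz'.2⟩
  have hrt : r + t = s + t := hMd.eq_of_mem ⟨add_nonneg hr.1 ht.1,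
    hMd.add_le_of_sumDef hr ht ha hb hab⟩ hst' (hsum ▸ hMd.add_mem_of_sumDef hr ht ha hb hab) hz
  exact ⟨z - b, add_right_cancel hrt ▸ ha, b, hb, hab, hsum⟩

/-- If `a ⊔ b` sat in a class `r > t`, then `(v - (a ⊔ b)) + a` and `(v - b) ⊕ a`, which are
equal in any ℓ-group, would lie in the different classes `u - r + t` and `u`. -/
theorem sup_mem_of_mem_of_mem (hMd : IsDecomposition u v Md) (ht : t ∈ Icc 0 u)
    (ha : a ∈ Md t) (hb : b ∈ Md t) : a ⊔ b ∈ Md t := by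
  have ha' := hMd.subset t ht ha
  obtain ⟨r, hr, hab⟩ := hMd.cover (a ⊔ b)
    ⟨ha'.1.trans le_sup_left, sup_le ha'.2 (hMd.subset t ht hb).2⟩
  obtain rfl | htr := (hMd.le_of_mem_of_le ht hr ha hab le_sup_left).eq_or_lt
  · exact hab
  have hr' := sub_mem_Icc_zero_iff_right.2 hr
  have hlt : u - r + t < u := by
    rw [sub_add_eq_add_sub, sub_lt_iff_lt_add]
    gcongr
  have hsum := hMd.add_mem_of_sumDef hr' ht (hMd.sub_mem hr hab) ha
    (hMd.sumDef_of_add_lt hr' ht hlt (hMd.sub_mem hr hab) ha)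
  have hoplus := hMd.oplus_mem (u - t) (sub_mem_Icc_zero_iff_right.2 ht) t ht _
    (hMd.sub_mem ht hb) a ha
  rw [sub_add_cancel, min_self] at hoplus
  have hident : v - (a ⊔ b) + a = oplus v (v - b) a := by
    rw [oplus, sub_sup, inf_add, sub_add_cancel, inf_comm]
  rw [hident] at hsum
  exact absurd (hMd.eq_of_mem ⟨add_nonneg hr'.1 ht.1, hlt.le⟩ ⟨ht.1.trans ht.2, le_rfl⟩
    hsum hoplus) hlt.ne

theorem sup_mem (hMd : IsDecomposition u v Md) (hs : s ∈ Icc 0 u) (ht : t ∈ Icc 0 u)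
    (ha : a ∈ Md s) (hb : b ∈ Md t) : a ⊔ b ∈ Md (max s t) := by
  rcases lt_trichotomy s t with hst | rfl | hts
  · rwa [sup_eq_right.2 (hMd.mono s hs t ht hst a ha b hb), max_eq_right hst.le]
  · rw [max_self]
    exact hMd.sup_mem_of_mem_of_mem hs ha hb
  · rwa [sup_eq_left.2 (hMd.mono t ht s hs hts b hb a ha), max_eq_left hts.le]

theorem inf_mem (hMd : IsDecomposition u v Md) (hs : s ∈ Icc 0 u) (ht : t ∈ Icc 0 u)
    (ha : a ∈ Md s) (hb : b ∈ Md t) : a ⊓ b ∈ Md (min s t) := by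
  have hmin : min s t ∈ Icc 0 u := ⟨le_min hs.1 ht.1, (min_le_left s t).trans hs.2⟩
  have h := hMd.sup_mem (sub_mem_Icc_zero_iff_right.2 hs) (sub_mem_Icc_zero_iff_right.2 ht)
    (hMd.sub_mem hs ha) (hMd.sub_mem ht hb)
  rw [max_sub_sub_left] at h
  have h' := hMd.neg_add_mem (sub_mem_Icc_zero_iff_right.2 hmin) h
  rwa [sub_sub_cancel, neg_sup, neg_sub, neg_sub, inf_add, sub_add_cancel,
    sub_add_cancel] at h'

end PseudoMV.IsDecomposition

open PseudoMV in
theorem stmt_0_general {H : Type*} [AddCommGroup H] [LinearOrder H] [IsOrderedAddMonoid H] {K : Type*} [Lattice K] [AddGroup K]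
    [CovariantClass K K (· + ·) (· ≤ ·)] [CovariantClass K K (Function.swap (· + ·)) (· ≤ ·)]
    (u : H) (v : K)
    (Md : H → Set K) (hMd : IsDecomposition u v Md)
    (s t : H) (hs : s ∈ Set.Icc (0 : H) u) (ht : t ∈ Set.Icc (0 : H) u)
    (a b : K) (ha : a ∈ Md s) (hb : b ∈ Md t) :
    ((s + t < u → sumDef v a b ∧ a + b ∈ Md (s + t)) ∧
      (sumDef v a b → s + t ≤ u) ∧
      (sumDef v a b → s + t = u → a + b ∈ Md u)) ∧
    (s + t < u →
      ((∀ a' ∈ Md s, ∀ b' ∈ Md t, sumDef v a' b') ∧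
        {z : K | ∃ a' ∈ Md s, ∃ b' ∈ Md t, sumDef v a' b' ∧ a' + b' = z} = Md (s + t))) ∧
    (u < s + t → ¬ sumDef v a b) ∧
    (a ⊔ b ∈ Md (max s t) ∧ a ⊓ b ∈ Md (min s t)) := by
  have hab_of_lt (hst : s + t < u) : sumDef v a b := hMd.sumDef_of_add_lt hs ht hst ha hb
  refine ⟨⟨fun hst => ⟨hab_of_lt hst, hMd.add_mem_of_sumDef hs ht ha hb (hab_of_lt hst)⟩,
    hMd.add_le_of_sumDef hs ht ha hb,
    fun hab hst => hst ▸ hMd.add_mem_of_sumDef hs ht ha hb hab⟩, fun hst => ⟨?_, ?_⟩,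
    fun hst hab => (hMd.add_le_of_sumDef hs ht ha hb hab).not_gt hst,
    hMd.sup_mem hs ht ha hb, hMd.inf_mem hs ht ha hb⟩
  · exact fun a' ha' b' hb' => hMd.sumDef_of_add_lt hs ht hst ha' hb'
  · ext z
    refine ⟨?_, fun hz => hMd.exists_add_eq hs ht hz hst.le⟩
    rintro ⟨a', ha', b', hb', hab, rfl⟩
    exact hMd.add_mem_of_sumDef hs ht ha' hb' hab

open PseudoMV in
/-- Theorem 3.2 (i)--(iv): arithmetic of an `(H,u)`-decomposition of an `(H,u)`-perfect
pseudo MV-algebra `M = Γ(K,v)`. -/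
theorem stmt_0 {H : Type*} [AddCommGroup H] [LinearOrder H] [IsOrderedAddMonoid H] {K : Type*} [Lattice K] [AddGroup K]
    [CovariantClass K K (· + ·) (· ≤ ·)] [CovariantClass K K (Function.swap (· + ·)) (· ≤ ·)]
    (u : H) (hu : IsStrongUnit u) (v : K) (hv : IsStrongUnit v)
    (Md : H → Set K) (hMd : IsDecomposition u v Md)
    (s t : H) (hs : s ∈ Set.Icc (0 : H) u) (ht : t ∈ Set.Icc (0 : H) u)
    (a b : K) (ha : a ∈ Md s) (hb : b ∈ Md t) :
    ((s + t < u → sumDef v a b ∧ a + b ∈ Md (s + t)) ∧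
      (sumDef v a b → s + t ≤ u) ∧
      (sumDef v a b → s + t = u → a + b ∈ Md u)) ∧
    (s + t < u →
      ((∀ a' ∈ Md s, ∀ b' ∈ Md t, sumDef v a' b') ∧
        {z : K | ∃ a' ∈ Md s, ∃ b' ∈ Md t, sumDef v a' b' ∧ a' + b' = z} = Md (s + t))) ∧
    (u < s + t → ¬ sumDef v a b) ∧
    (a ⊔ b ∈ Md (max s t) ∧ a ⊓ b ∈ Md (min s t)) :=
  stmt_0_general u v Md hMd s t hs ht a b ha hb
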